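/- For all n ≥ 3, g = ((2n−2)/(2n−3))·f₁ + (c(n−2)/(2n−3))·𝟙 and h = ((2n−2)/(2n−3))·f₁ − (c(2n−2)/((2n−1)(2n−3)))·𝟙, where 𝟙 is the constant all-ones function on the set of perfect matchings. -/

import Mathlib

set_option linter.unusedVariables false

open scoped Classical

noncomputable section

/-- The derangement graph on `Sym(n)`: permutations adjacent iff they disagree everywhere
(equivalently, `σ τ⁻¹` is a derangement). -/
def derangementGraph (n : ℕ) : SimpleGraph (Equiv.Perm (Fin n)) where
  Adj σ τ := σ ≠ τ ∧ ∀ i, σ i ≠ τ i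
  symm := ⟨fun σ τ h => ⟨h.1.symm, fun i => (h.2 i).symm⟩⟩
  loopless := ⟨fun σ h => h.1 rfl⟩

/-- The star `A_{a→b}` in the derangement graph: permutations sending `a` to `b`. -/
def derStar (n : ℕ) (a b : Fin n) : Set (Equiv.Perm (Fin n)) := {σ | σ a = b}

/-- Perfect matchings of `K_{2n}`, encoded as fixed-point-free involutions of `Fin (2n)`. -/
abbrev PMatching (n : ℕ) :=
  {f : Equiv.Perm (Fin (2 * n)) // (∀ x, f (f x) = x) ∧ ∀ x, f x ≠ x}

/-- The perfect matching graph `M_n`: matchings adjacent iff they share no edge. -/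
def matchingGraph (n : ℕ) : SimpleGraph (PMatching n) where
  Adj m m' := m ≠ m' ∧ ∀ x, m.1 x ≠ m'.1 x
  symm := ⟨fun m m' h => ⟨h.1.symm, fun x => (h.2 x).symm⟩⟩
  loopless := ⟨fun m h => h.1 rfl⟩

/-- The star `S_e` of a (non-diagonal) pair `e : Sym2 (Fin (2n))`:
all perfect matchings containing the edge `e`. -/
def pmStar (n : ℕ) (e : Sym2 (Fin (2 * n))) : Set (PMatching n) :=
  {m | ∃ x, e = s(x, m.1 x)}

/-- A set of vertices is independent if it spans no edges. -/
def IsIndepSet {V : Type*} (G : SimpleGraph V) (s : Set V) : Prop :=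
  ∀ a ∈ s, ∀ b ∈ s, ¬ G.Adj a b

/-- The independence number of a finite graph. -/
noncomputable def indepNum {V : Type*} [Fintype V] (G : SimpleGraph V) : ℕ :=
  sSup {k | ∃ s : Set V, IsIndepSet G s ∧ s.ncard = k}

/-- `edIn G s` is the number of edges of `G` with both endpoints in `s`. -/
noncomputable def edIn {V : Type*} (G : SimpleGraph V) (s : Set V) : ℕ :=
  Nat.card {e : Sym2 V // e ∈ G.edgeSet ∧ ∀ v ∈ e, v ∈ s}

/-- Probability that the random spanning subgraph `G_p` of `G` (each edge of `G` kept
independently with probability `p`) satisfies the predicate `P`. -/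
noncomputable def prRandSub {V : Type*} [Fintype V] (G : SimpleGraph V) (p : ℝ)
    (P : SimpleGraph V → Prop) : ℝ :=
  ∑ S ∈ G.edgeFinset.powerset,
    if P (SimpleGraph.fromEdgeSet (S : Set (Sym2 V))) then
      p ^ S.card * (1 - p) ^ (G.edgeFinset.card - S.card) else 0

/-- The edges of `K_{2n}`: non-diagonal elements of `Sym2 (Fin (2n))`. -/
noncomputable def pmEdges (n : ℕ) : Finset (Sym2 (Fin (2 * n))) :=
  Finset.univ.filter fun e => ¬e.IsDiag

/-- Expectation of a function on perfect matchings: `E[φ] = (1/(2n-1)!!) Σ_P φ(P)`. -/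
noncomputable def pmExp (n : ℕ) (φ : PMatching n → ℝ) : ℝ :=
  (1 / (Nat.doubleFactorial (2 * n - 1) : ℝ)) * ∑ m, φ m

/-- The inner product `⟨f,g⟩ = (1/(2n-1)!!) Σ_P f(P)g(P)` on functions on matchings. -/
noncomputable def pmInner (n : ℕ) (f g : PMatching n → ℝ) : ℝ :=
  (1 / (Nat.doubleFactorial (2 * n - 1) : ℝ)) * ∑ m, f m * g m

/-- `U`: the linear span of the indicator vectors of the stars of `M_n`. -/
noncomputable def starSpan (n : ℕ) : Submodule ℝ (PMatching n → ℝ) :=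
  Submodule.span ℝ
    {f | ∃ e : Sym2 (Fin (2 * n)), ¬e.IsDiag ∧ f = Set.indicator (pmStar n e) 1}

/-- `a_e = |A ∩ S_e|/(2n-3)!!`. -/
noncomputable def aCoe (n : ℕ) (A : Set (PMatching n)) (e : Sym2 (Fin (2 * n))) : ℝ :=
  ((A ∩ pmStar n e).ncard : ℝ) / (Nat.doubleFactorial (2 * n - 3) : ℝ)

/-- `b_e = a_e - c/(2n-1)`. -/
noncomputable def bCoe (n : ℕ) (A : Set (PMatching n)) (c : ℝ)
    (e : Sym2 (Fin (2 * n))) : ℝ :=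
  aCoe n A e - c / (2 * (n : ℝ) - 1)

/-- `g = Σ_e a_e · 1_{S_e}`. -/
noncomputable def gFun (n : ℕ) (A : Set (PMatching n)) : PMatching n → ℝ :=
  fun m => ∑ e ∈ pmEdges n, aCoe n A e * Set.indicator (pmStar n e) 1 m

/-- `h = Σ_e b_e · 1_{S_e}`. -/
noncomputable def hFun (n : ℕ) (A : Set (PMatching n)) (c : ℝ) : PMatching n → ℝ :=
  fun m => ∑ e ∈ pmEdges n, bCoe n A c e * Set.indicator (pmStar n e) 1 m

/-!
Matchings through a fixed edge `ab` of `K_{2n}` are the matchings of `K_{2n-2}` on the remaining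
vertices, so `|S_e| = (2n-3)‼`, and `|S_e ∩ S_f| = (2n-5)‼` for disjoint edges `e, f`, while
`S_e ∩ S_f = ∅` for distinct edges sharing a vertex. Of the `n` edges of a matching `m`, the ones
missing `a` and `b` number `n - 1` or `n - 2` according as `ab ∈ m`, so the operator
`T φ (m) = Σ_{e ∈ m} Σ_{P ∋ e} φ(P)` satisfies
`(2n-3) T φ = (2n-2)(2n-3)‼ φ + (n-2) (Σ φ) 𝟙` on every star indicator, hence on all of `U`.
Now `g(m) = Σ_{e ∈ m} a_e`, and `a_e (2n-3)‼ = Σ_{P ∋ e} 1_A(P) = Σ_{P ∋ e} f₁(P)` because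
`1_A - f₁ ⊥ 1_{S_e}`; thus `g = T f₁ / (2n-3)‼`, and `Σ f₁ = |A| = c (2n-3)‼` because `𝟙 ∈ U`.
Finally `h = g - n c / (2n-1)`.
-/

open scoped Nat

abbrev FPFInvolution (V : Type*) := {f : Equiv.Perm V // (∀ x, f (f x) = x) ∧ ∀ x, f x ≠ x}

namespace FPFInvolution

variable {V : Type*}

lemma apply_eq_iff (m : FPFInvolution V) {x y : V} : m.1 x = y ↔ x = m.1 y := by
  constructor
  · rintro rfl; exact (m.2.1 x).symm
  · rintro rfl; exact m.2.1 y

lemma apply_ne_and_ne {m : FPFInvolution V} {a b x : V} (hm : m.1 a = b) (hx : x ≠ a ∧ x ≠ b) :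
    m.1 x ≠ a ∧ m.1 x ≠ b := by
  have hb : m.1 b = a := ((apply_eq_iff m).1 hm).symm
  rw [Ne, Ne, apply_eq_iff, apply_eq_iff, hm, hb]
  exact hx.symm

lemma mk_apply_eq_mk_apply_iff (m : FPFInvolution V) {x y : V} :
    s(x, m.1 x) = s(y, m.1 y) ↔ x = y ∨ x = m.1 y := by
  rw [Sym2.eq_iff]
  constructor
  · rintro (⟨h, -⟩ | ⟨h, -⟩)
    · exact Or.inl h
    · exact Or.inr h
  · rintro (rfl | rfl)
    · exact Or.inl ⟨rfl, rfl⟩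
    · exact Or.inr ⟨rfl, m.2.1 y⟩

def restrict {a b : V} (m : {m : FPFInvolution V // m.1 a = b}) :
    FPFInvolution {x : V // x ≠ a ∧ x ≠ b} :=
  ⟨Function.Involutive.toPerm (fun x => ⟨m.1.1 x, apply_ne_and_ne m.2 x.2⟩)
      fun x => Subtype.ext (m.1.2.1 x),
    fun x => Subtype.ext (m.1.2.1 x), fun x hx => m.1.2.2 x (congrArg Subtype.val hx)⟩

section restriction

variable [DecidableEq V]

def extendFun (a b : V) (f : FPFInvolution {x : V // x ≠ a ∧ x ≠ b}) (x : V) : V :=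
  if h : x ≠ a ∧ x ≠ b then (f.1 ⟨x, h⟩).1 else Equiv.swap a b x

section extend

variable {a b : V} (f : FPFInvolution {x : V // x ≠ a ∧ x ≠ b})

lemma extendFun_left : extendFun a b f a = b := by simp [extendFun]

lemma extendFun_right : extendFun a b f b = a := by simp [extendFun]

lemma extendFun_of_ne {x : V} (hx : x ≠ a ∧ x ≠ b) : extendFun a b f x = (f.1 ⟨x, hx⟩).1 :=
  dif_pos hx

lemma extendFun_involutive : Function.Involutive (extendFun a b f) := by
  intro x
  by_cases hx : x ≠ a ∧ x ≠ b
  · rw [extendFun_of_ne f hx, extendFun_of_ne f (f.1 ⟨x, hx⟩).2, f.2.1]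
  · obtain rfl | rfl := not_and_or.1 hx |>.imp not_not.1 not_not.1
    · rw [extendFun_left, extendFun_right]
    · rw [extendFun_right, extendFun_left]

end extend

def restrictEquiv {a b : V} (hab : a ≠ b) :
    {m : FPFInvolution V // m.1 a = b} ≃ FPFInvolution {x : V // x ≠ a ∧ x ≠ b} where
  toFun := restrict
  invFun f := by
    refine ⟨⟨Function.Involutive.toPerm _ (extendFun_involutive f), extendFun_involutive f,
      fun x hx => ?_⟩, extendFun_left f⟩
    by_cases hxab : x ≠ a ∧ x ≠ b
    · exact f.2.2 ⟨x, hxab⟩ (Subtype.ext ((extendFun_of_ne f hxab).symm.trans hx))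
    · obtain rfl | rfl := not_and_or.1 hxab |>.imp not_not.1 not_not.1
      · exact hab.symm ((extendFun_left f).symm.trans hx)
      · exact hab ((extendFun_right f).symm.trans hx)
  left_inv m := by
    refine Subtype.ext (Subtype.ext (Equiv.ext fun x => ?_))
    by_cases hxab : x ≠ a ∧ x ≠ b
    · exact extendFun_of_ne _ hxab
    · obtain rfl | rfl := not_and_or.1 hxab |>.imp not_not.1 not_not.1
      · exact (extendFun_left _).trans m.2.symm
      · exact (extendFun_right _).trans ((apply_eq_iff m.1).1 m.2)
  right_inv f := Subtype.ext (Equiv.ext fun x => Subtype.ext (by exact extendFun_of_ne f x.2))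

end restriction

lemma card_subtype_ne_and_ne [Fintype V] {a b : V} (hab : a ≠ b) :
    Nat.card {x : V // x ≠ a ∧ x ≠ b} = Nat.card V - 2 := by
  classical
  rw [Nat.card_eq_fintype_card, Fintype.card_subtype, Nat.card_eq_fintype_card,
    ← Finset.card_pair hab, ← Finset.card_univ, ← Finset.card_sdiff_of_subset (by simp)]
  congr 1
  ext x
  simp [not_or]

theorem card_eq [Finite V] {k : ℕ} (hV : Nat.card V = 2 * k) :
    Nat.card (FPFInvolution V) = (2 * k - 1)‼ := by
  induction k generalizing V with
  | zero =>
    have : IsEmpty V := Finite.card_eq_zero_iff.1 hV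
    refine Nat.card_eq_one_iff_unique.2 ⟨⟨fun f g => ?_⟩, ⟨⟨1, isEmptyElim, isEmptyElim⟩⟩⟩
    exact Subtype.ext (Equiv.ext isEmptyElim)
  | succ k ih =>
    classical
    have : Fintype V := Fintype.ofFinite V
    obtain ⟨v⟩ : Nonempty V := Nat.card_pos_iff.1 (by omega) |>.1
    let partner : FPFInvolution V → {w : V // w ≠ v} := fun m => ⟨m.1 v, m.2.2 v⟩
    have hfiber (w : {w : V // w ≠ v}) : Nat.card {m // partner m = w} = (2 * k - 1)‼ := by
      have e : {m // partner m = w} ≃ {m : FPFInvolution V // m.1 v = w.1} :=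
        Equiv.subtypeEquivRight fun _ => Subtype.ext_iff
      rw [Nat.card_congr (e.trans (restrictEquiv (Ne.symm w.2)))]
      exact ih (by rw [card_subtype_ne_and_ne (Ne.symm w.2), hV]; omega)
    have hpartners : Nat.card {w : V // w ≠ v} = 2 * k + 1 := by
      rw [Nat.card_eq_fintype_card, Fintype.card_subtype_compl, Fintype.card_subtype_eq,
        ← Nat.card_eq_fintype_card, hV]
      omega
    rw [Nat.card_congr (Equiv.sigmaFiberEquiv partner).symm, Nat.card_sigma,
      Finset.sum_congr rfl fun w _ => hfiber w, Finset.sum_const, Finset.card_univ,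
      ← Nat.card_eq_fintype_card, hpartners, smul_eq_mul]
    exact (Nat.doubleFactorial_add_one (2 * k)).symm

theorem card_apply_eq [Finite V] {k : ℕ} (hV : Nat.card V = 2 * k) {a b : V} (hab : a ≠ b) :
    Nat.card {m : FPFInvolution V // m.1 a = b} = (2 * k - 3)‼ := by
  classical
  have : Fintype V := Fintype.ofFinite V
  have hk : 1 ≤ k := by
    have := Finite.one_lt_card_iff_nontrivial.2 ⟨a, b, hab⟩
    omega
  rw [Nat.card_congr (restrictEquiv hab),
    card_eq (k := k - 1) (by rw [card_subtype_ne_and_ne hab, hV]; omega)]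
  congr 1
  omega

theorem card_apply_eq_and_apply_eq [Finite V] {k : ℕ} (hV : Nat.card V = 2 * k) {a b x y : V}
    (hab : a ≠ b) (hxy : x ≠ y) (hx : x ≠ a ∧ x ≠ b) (hy : y ≠ a ∧ y ≠ b) :
    Nat.card {m : FPFInvolution V // m.1 a = b ∧ m.1 x = y} = (2 * k - 5)‼ := by
  classical
  have : Fintype V := Fintype.ofFinite V
  have e : {m : FPFInvolution V // m.1 a = b ∧ m.1 x = y} ≃
      {f : FPFInvolution {z : V // z ≠ a ∧ z ≠ b} // f.1 ⟨x, hx⟩ = ⟨y, hy⟩} :=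
    (Equiv.subtypeSubtypeEquivSubtypeInter _ _).symm.trans
      (Equiv.subtypeEquiv (restrictEquiv hab) fun _ =>
        ⟨fun h => Subtype.ext h, fun h => congrArg Subtype.val h⟩)
  rw [Nat.card_congr e, card_apply_eq (k := k - 1) (by rw [card_subtype_ne_and_ne hab, hV]; omega)
    (fun h => hxy (congrArg Subtype.val h))]
  congr 1
  omega

section edges

variable [Fintype V] [DecidableEq V]

def edges (m : FPFInvolution V) : Finset (Sym2 V) :=
  Finset.univ.image fun x => s(x, m.1 x)

lemma two_mul_card_edges (m : FPFInvolution V) : 2 * (edges m).card = Fintype.card V := by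
  have hfiber : ∀ e ∈ edges m, (Finset.univ.filter fun y => s(y, m.1 y) = e).card = 2 := by
    simp only [edges, Finset.mem_image, Finset.mem_univ, true_and, forall_exists_index]
    rintro e x rfl
    have : (Finset.univ.filter fun y => s(y, m.1 y) = s(x, m.1 x)) = {x, m.1 x} := by
      ext y
      simp only [Finset.mem_filter, Finset.mem_univ, true_and, Finset.mem_insert,
        Finset.mem_singleton, mk_apply_eq_mk_apply_iff]
    rw [this, Finset.card_pair (m.2.2 x).symm]
  calc 2 * (edges m).card
      = ∑ e ∈ edges m, (Finset.univ.filter fun y => s(y, m.1 y) = e).card := by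
        rw [Finset.sum_congr rfl hfiber, Finset.sum_const, smul_eq_mul, mul_comm]
    _ = Fintype.card V := (Finset.card_eq_sum_card_image _ _).symm

end edges

end FPFInvolution

lemma Nat.cast_doubleFactorial_two_mul_sub_three {n : ℕ} (hn : 2 ≤ n) :
    ((2 * n - 3)‼ : ℝ) = (2 * n - 3) * (2 * n - 5)‼ := by
  obtain ⟨k, rfl⟩ := Nat.exists_eq_add_of_le' hn
  rw [show 2 * (k + 2) - 3 = 2 * k + 1 by omega, show 2 * (k + 2) - 5 = 2 * k - 1 by omega,
    Nat.doubleFactorial_add_one]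
  push_cast
  ring

lemma sum_indicator_one_eq_ncard {α : Type*} [Fintype α] (s : Set α) :
    ∑ x, s.indicator (1 : α → ℝ) x = s.ncard := by
  classical
  simp [Set.indicator_apply, Finset.sum_boole, Set.ncard_eq_toFinset_card']

lemma sum_indicator_one_mul_indicator_one {α : Type*} [Fintype α] (s t : Set α) :
    ∑ x, s.indicator (1 : α → ℝ) x * t.indicator 1 x = (s ∩ t).ncard := by
  rw [← sum_indicator_one_eq_ncard, Set.inter_indicator_one]
  rfl

open FPFInvolution

variable {n : ℕ}

lemma mem_pmStar_iff (m : PMatching n) (a b : Fin (2 * n)) : m ∈ pmStar n s(a, b) ↔ m.1 a = b := by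
  constructor
  · rintro ⟨x, hx⟩
    rcases Sym2.eq_iff.1 hx with ⟨rfl, rfl⟩ | ⟨rfl, rfl⟩
    · rfl
    · exact m.2.1 _
  · intro h
    exact ⟨a, by rw [h]⟩

lemma mem_edges_iff_mem_pmStar (m : PMatching n) (e : Sym2 (Fin (2 * n))) :
    e ∈ edges m ↔ m ∈ pmStar n e := by
  simp only [edges, Finset.mem_image, Finset.mem_univ, true_and, pmStar, Set.mem_ofPred_eq]
  exact ⟨fun ⟨x, h⟩ => ⟨x, h.symm⟩, fun ⟨x, h⟩ => ⟨x, h.symm⟩⟩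

lemma edges_subset_pmEdges (m : PMatching n) : edges m ⊆ pmEdges n := by
  simp only [edges, pmEdges, Finset.subset_iff, Finset.mem_image, Finset.mem_univ, true_and,
    Finset.mem_filter, forall_exists_index]
  rintro e x rfl
  exact fun h => m.2.2 x (Sym2.mk_isDiag_iff.1 h).symm

lemma card_edges (m : PMatching n) : (edges m).card = n := by
  have := two_mul_card_edges m
  rw [Fintype.card_fin] at this
  omega

lemma sum_pmEdges_mul_indicator (m : PMatching n) (w : Sym2 (Fin (2 * n)) → ℝ) :
    ∑ e ∈ pmEdges n, w e * (pmStar n e).indicator 1 m = ∑ e ∈ edges m, w e := by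
  simp only [Set.indicator_apply, Pi.one_apply, mul_ite, mul_one, mul_zero,
    ← mem_edges_iff_mem_pmStar, ← Finset.sum_filter]
  congr 1
  ext e
  simpa using fun h => edges_subset_pmEdges m h

lemma ncard_pmStar {a b : Fin (2 * n)} (hab : a ≠ b) : (pmStar n s(a, b)).ncard = (2 * n - 3)‼ := by
  rw [← Nat.card_coe_set_eq, Nat.card_congr (Equiv.subtypeEquivRight fun m => mem_pmStar_iff m a b)]
  exact card_apply_eq (Nat.card_fin _) hab

lemma ncard_pmStar_inter_pmStar {a b x y : Fin (2 * n)} (hab : a ≠ b) (hxy : x ≠ y)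
    (hx : x ≠ a ∧ x ≠ b) (hy : y ≠ a ∧ y ≠ b) :
    (pmStar n s(a, b) ∩ pmStar n s(x, y)).ncard = (2 * n - 5)‼ := by
  rw [← Nat.card_coe_set_eq, Nat.card_congr (Equiv.subtypeEquivRight fun m => by
    rw [Set.mem_inter_iff, mem_pmStar_iff, mem_pmStar_iff])]
  exact card_apply_eq_and_apply_eq (Nat.card_fin _) hab hxy hx hy

lemma pmStar_inter_pmStar_eq_empty {a b y : Fin (2 * n)} (hby : b ≠ y) :
    pmStar n s(a, b) ∩ pmStar n s(a, y) = ∅ := by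
  ext m
  simp only [Set.mem_inter_iff, mem_pmStar_iff, Set.mem_empty_iff_false, iff_false, not_and]
  rintro rfl
  exact hby

lemma sum_edges_ncard_pmStar_inter (hn : 2 ≤ n) {a b : Fin (2 * n)} (hab : a ≠ b)
    (m : PMatching n) :
    ∑ e ∈ edges m, ((pmStar n s(a, b) ∩ pmStar n e).ncard : ℝ) =
      ((2 * n - 2) * (pmStar n s(a, b)).indicator 1 m + (n - 2)) * (2 * n - 5)‼ := by
  set T : Finset (Sym2 (Fin (2 * n))) := {s(a, m.1 a), s(b, m.1 b)}
  have hT : T ⊆ edges m := by simp [T, Finset.insert_subset_iff, edges]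
  have hrest : ∀ e ∈ edges m \ T,
      ((pmStar n s(a, b) ∩ pmStar n e).ncard : ℝ) = (2 * n - 5)‼ := by
    intro e he
    simp only [T, edges, Finset.mem_sdiff, Finset.mem_image, Finset.mem_univ, true_and,
      Finset.mem_insert, Finset.mem_singleton, not_or] at he
    obtain ⟨⟨x, rfl⟩, hxa, hxb⟩ := he
    rw [mk_apply_eq_mk_apply_iff, not_or, ← apply_eq_iff] at hxa hxb
    rw [ncard_pmStar_inter_pmStar hab (m.2.2 x).symm ⟨hxa.1, hxb.1⟩ ⟨hxa.2, hxb.2⟩]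
  rw [← Finset.sum_sdiff hT, Finset.sum_congr rfl hrest, Finset.sum_const,
    Finset.card_sdiff_of_subset hT, card_edges, nsmul_eq_mul]
  by_cases hm : m.1 a = b
  · have hTab : T = {s(a, b)} := by
      have hmb : m.1 b = a := ((apply_eq_iff m).1 hm).symm
      simp only [T, hm, hmb]
      rw [Sym2.eq_swap (a := b), Finset.pair_eq_singleton]
    rw [hTab, Finset.sum_singleton, Set.inter_self, ncard_pmStar hab, Finset.card_singleton,
      Set.indicator_of_mem ((mem_pmStar_iff m a b).2 hm), Pi.one_apply,
      Nat.cast_doubleFactorial_two_mul_sub_three hn, Nat.cast_sub (by omega)]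
    push_cast
    ring
  · have hmb : m.1 b ≠ a := fun h => hm (by rw [← h, m.2.1])
    have hne : s(a, m.1 a) ≠ s(b, m.1 b) := by
      rw [Ne, mk_apply_eq_mk_apply_iff, not_or, ← apply_eq_iff]
      exact ⟨hab, hm⟩
    rw [Set.indicator_of_notMem (fun h => hm ((mem_pmStar_iff m a b).1 h)), Finset.sum_pair hne,
      pmStar_inter_pmStar_eq_empty (Ne.symm hm), Sym2.eq_swap (a := a),
      pmStar_inter_pmStar_eq_empty (Ne.symm hmb), Set.ncard_empty, Finset.card_pair hne,
      Nat.cast_sub hn]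
    push_cast
    ring

theorem sum_edges_sum_mul_indicator_of_mem_starSpan (hn : 2 ≤ n) {f : PMatching n → ℝ}
    (hf : f ∈ starSpan n) (m : PMatching n) :
    (2 * n - 3) * ∑ e ∈ edges m, ∑ P, f P * (pmStar n e).indicator 1 P =
      (2 * n - 2) * (2 * n - 3)‼ * f m + (n - 2) * ∑ P, f P := by
  induction hf using Submodule.span_induction with
  | mem u hu =>
    obtain ⟨e, he, rfl⟩ := hu
    induction e using Sym2.ind with
    | _ a b =>
      have hab : a ≠ b := fun h => he (Sym2.mk_isDiag_iff.2 h)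
      simp only [sum_indicator_one_mul_indicator_one, sum_edges_ncard_pmStar_inter hn hab,
        sum_indicator_one_eq_ncard, ncard_pmStar hab, Nat.cast_doubleFactorial_two_mul_sub_three hn]
      ring
  | zero => simp
  | add u v _ _ hu hv =>
    simp only [Pi.add_apply, add_mul, Finset.sum_add_distrib, mul_add]
    linear_combination hu + hv
  | smul r u _ hu =>
    simp only [Pi.smul_apply, smul_eq_mul, mul_assoc, ← Finset.mul_sum]
    linear_combination r * hu

lemma one_mem_starSpan (hn : 1 ≤ n) : (1 : PMatching n → ℝ) ∈ starSpan n := by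
  have hsum : ∑ e ∈ pmEdges n, (pmStar n e).indicator (1 : PMatching n → ℝ) ∈ starSpan n :=
    Submodule.sum_mem _ fun e he => Submodule.subset_span ⟨e, (Finset.mem_filter.1 he).2, rfl⟩
  convert Submodule.smul_mem _ (n : ℝ)⁻¹ hsum
  ext m
  have := sum_pmEdges_mul_indicator m 1
  simp only [Pi.one_apply, one_mul, Finset.sum_const, card_edges, nsmul_eq_mul, mul_one] at this
  rw [Pi.smul_apply, Finset.sum_apply, this, smul_eq_mul, inv_mul_cancel₀ (by positivity)]
  rfl

lemma sum_mul_eq_of_pmInner_sub_eq_zero {f g u : PMatching n → ℝ} (h : pmInner n (f - g) u = 0) :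
    ∑ P, f P * u P = ∑ P, g P * u P := by
  rw [pmInner, mul_eq_zero, one_div, inv_eq_zero, Nat.cast_eq_zero] at h
  rw [← sub_eq_zero, ← Finset.sum_sub_distrib]
  simpa only [Pi.sub_apply, sub_mul] using h.resolve_left (Nat.doubleFactorial_pos _).ne'

lemma gFun_apply (A : Set (PMatching n)) (m : PMatching n) :
    gFun n A m = ∑ e ∈ edges m, aCoe n A e :=
  sum_pmEdges_mul_indicator m _

lemma hFun_apply (A : Set (PMatching n)) (c : ℝ) (m : PMatching n) :
    hFun n A c m = gFun n A m - n * (c / (2 * n - 1)) := by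
  simp only [hFun, bCoe, sub_mul, Finset.sum_sub_distrib, gFun]
  rw [sum_pmEdges_mul_indicator m fun _ => c / (2 * n - 1), Finset.sum_const, card_edges,
    nsmul_eq_mul]

lemma aCoe_eq_sum_mul_indicator (A : Set (PMatching n)) (e : Sym2 (Fin (2 * n))) :
    aCoe n A e = (∑ P, A.indicator 1 P * (pmStar n e).indicator 1 P) / (2 * n - 3)‼ := by
  rw [aCoe, sum_indicator_one_mul_indicator_one]

theorem stmt17_general (n : ℕ) (hn : 3 ≤ n) (A : Set (PMatching n)) (c : ℝ)
    (hA : (A.ncard : ℝ) = c * (Nat.doubleFactorial (2 * n - 3) : ℝ))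
    (f₁ : PMatching n → ℝ) (hf₁ : f₁ ∈ starSpan n)
    (hproj : ∀ u ∈ starSpan n, pmInner n (Set.indicator A 1 - f₁) u = 0) :
    gFun n A =
        (fun m => (2 * (n : ℝ) - 2) / (2 * (n : ℝ) - 3) * f₁ m +
          c * ((n : ℝ) - 2) / (2 * (n : ℝ) - 3)) ∧
      hFun n A c =
        (fun m => (2 * (n : ℝ) - 2) / (2 * (n : ℝ) - 3) * f₁ m -
          c * (2 * (n : ℝ) - 2) / ((2 * (n : ℝ) - 1) * (2 * (n : ℝ) - 3))) := by
  have hn' : (3 : ℝ) ≤ n := by exact_mod_cast hn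
  have h3 : (2 * n - 3 : ℝ) ≠ 0 := by linarith
  have h1 : (2 * n - 1 : ℝ) ≠ 0 := by linarith
  have hproj' u (hu : u ∈ starSpan n) := sum_mul_eq_of_pmInner_sub_eq_zero (hproj u hu)
  have hsum : ∑ P, f₁ P = c * (2 * n - 3)‼ := by
    simpa [sum_indicator_one_eq_ncard, hA] using (hproj' 1 (one_mem_starSpan (by omega))).symm
  have hg m : gFun n A m = (2 * n - 2) / (2 * n - 3) * f₁ m + c * (n - 2) / (2 * n - 3) := by
    have hkey := sum_edges_sum_mul_indicator_of_mem_starSpan (by omega) hf₁ m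
    have ha e (he : e ∈ edges m) :
        aCoe n A e = (∑ P, f₁ P * (pmStar n e).indicator 1 P) / (2 * n - 3)‼ := by
      have hdiag := (Finset.mem_filter.1 (edges_subset_pmEdges m he)).2
      rw [aCoe_eq_sum_mul_indicator, hproj' _ (Submodule.subset_span ⟨e, hdiag, rfl⟩)]
    rw [hsum] at hkey
    rw [gFun_apply, Finset.sum_congr rfl ha, ← Finset.sum_div]
    field_simp
    linear_combination hkey
  refine ⟨funext hg, funext fun m => ?_⟩
  rw [hFun_apply, hg]
  field_simp
  ring

/-- Expressing `g` and `h` affinely in terms of `f₁ = Proj_U(1_A)`: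
`g = ((2n-2)/(2n-3)) f₁ + (c(n-2)/(2n-3)) 𝟙` and
`h = ((2n-2)/(2n-3)) f₁ - (c(2n-2)/((2n-1)(2n-3))) 𝟙`. -/
theorem stmt17 (n : ℕ) (hn : 3 ≤ n) (A : Set (PMatching n)) (c : ℝ) (hc : 0 ≤ c)
    (hA : (A.ncard : ℝ) = c * (Nat.doubleFactorial (2 * n - 3) : ℝ))
    (f₁ : PMatching n → ℝ) (hf₁ : f₁ ∈ starSpan n)
    (hproj : ∀ u ∈ starSpan n, pmInner n (Set.indicator A 1 - f₁) u = 0) :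
    gFun n A =
        (fun m => (2 * (n : ℝ) - 2) / (2 * (n : ℝ) - 3) * f₁ m +
          c * ((n : ℝ) - 2) / (2 * (n : ℝ) - 3)) ∧
      hFun n A c =
        (fun m => (2 * (n : ℝ) - 2) / (2 * (n : ℝ) - 3) * f₁ m -
          c * (2 * (n : ℝ) - 2) / ((2 * (n : ℝ) - 1) * (2 * (n : ℝ) - 3))) :=
  stmt17_general n hn A c hA f₁ hf₁ hproj

end
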